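/- Let $\tilde{g}_N:\mathbb{R}_+ \to \mathbb{R}$ be smooth with support in $(R_0, R_1)$, $0 < R_0 < R_1$, let $\alpha_0$ be smooth, and define $g_N(r,\alpha) = \tilde{g}_N(r)\sin(N\alpha + N\alpha_0(r,t))$ for $N \in \mathbb{N}$. Then for $\gamma \in [-1,1)$ there exists $C > 0$ depending only on $R_0, R_1, \gamma$ such that $|v^\gamma_r(g_N)(r,\alpha)| \le \frac{C\|\tilde{g}_N\|_\infty}{N\,(R_0-r)^{2+\gamma}}$ for all $0 \le r < R_0$. -/

import Mathlib

open MeasureTheory Real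

/-- The constant `C(γ) = Γ((1+γ)/2) / (2^(1-γ) π Γ((1-γ)/2))`. -/
noncomputable def Cgamma (γ : ℝ) : ℝ :=
  Real.Gamma ((1 + γ) / 2) / (2 ^ (1 - γ) * Real.pi * Real.Gamma ((1 - γ) / 2))

/-- Radial component of the gSQG velocity applied to
`g_N(r,α) = g̃_N(r) sin(Nα + N α₀(r))`, in polar coordinates. -/
noncomputable def vRadial (γ : ℝ) (gt α₀ : ℝ → ℝ) (N : ℕ) (r α : ℝ) : ℝ :=
  Cgamma γ * ∫ h in Set.Ioi (-r),
    gt (r + h) * (r + h) ^ 2 * Real.cos (N * α - N * α₀ (r + h)) *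
      ∫ α' in Set.Icc (-Real.pi) Real.pi,
        Real.sin α' * Real.sin (N * α') /
          |h ^ 2 + 2 * r * (r + h) * (1 - Real.cos α')| ^ ((3 + γ) / 2)

-- inner oscillatory integral bound via integration by parts
lemma inner_osc_bound {p c h : ℝ} (hp : 1 ≤ p) (hc : 0 ≤ c) (hh : 0 < h)
    {N : ℕ} (hN : 0 < N) :
    |∫ α' in Set.Icc (-Real.pi) Real.pi,
        Real.sin α' * Real.sin (N * α') / |h ^ 2 + c * (1 - Real.cos α')| ^ p| ≤
      2 * Real.pi * (1 + 2 * p) / N * (h ^ 2) ^ (-p) := by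
  have hNR : (0:ℝ) < N := by exact_mod_cast hN
  set D : ℝ → ℝ := fun x => h ^ 2 + c * (1 - Real.cos x) with hDdef
  have hD : ∀ x, 0 < D x := by
    intro x
    have : 0 ≤ c * (1 - Real.cos x) :=
      mul_nonneg hc (by nlinarith [Real.cos_le_one x])
    have : 0 < h ^ 2 := by positivity
    simp only [hDdef]; nlinarith [mul_nonneg hc (by nlinarith [Real.cos_le_one x] : (0:ℝ) ≤ 1 - Real.cos x)]
  set u : ℝ → ℝ := fun x => Real.sin x * D x ^ (-p) with hudef
  set u' : ℝ → ℝ := fun x =>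
    Real.cos x * D x ^ (-p) + Real.sin x * (c * Real.sin x * -p * D x ^ (-p - 1)) with hu'def
  set v : ℝ → ℝ := fun x => -Real.cos (N * x) / N with hvdef
  -- derivative facts
  have hDd : ∀ x, HasDerivAt D (c * Real.sin x) x := by
    intro x
    have h1 : HasDerivAt (fun x => 1 - Real.cos x) (Real.sin x) x := by
      simpa using (Real.hasDerivAt_cos x).const_sub 1
    have := (hasDerivAt_const x (h ^ 2)).add (h1.const_mul c)
    rw [zero_add] at this
    exact this
  have hu : ∀ x, HasDerivAt u (u' x) x := by
    intro x
    have h2 : HasDerivAt (fun x => D x ^ (-p)) (c * Real.sin x * -p * D x ^ (-p - 1)) x :=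
      (hDd x).rpow_const (Or.inl (hD x).ne')
    have := (Real.hasDerivAt_sin x).mul h2
    exact this
  have hv : ∀ x, HasDerivAt v (Real.sin (N * x)) x := by
    intro x
    have h1 : HasDerivAt (fun x : ℝ => (N : ℝ) * x) ((N:ℝ)) x := by
      simpa using (hasDerivAt_id x).const_mul (N:ℝ)
    have h2 := (h1.cos).neg.div_const (N:ℝ)
    refine h2.congr_deriv ?_
    rw [neg_mul, neg_neg, mul_div_assoc, div_self hNR.ne', mul_one]
  -- continuity of u'
  have hDc : Continuous D := by
    simp only [hDdef]; fun_prop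
  have hr1 : Continuous fun x => D x ^ (-p) :=
    hDc.rpow_const fun x => Or.inl (hD x).ne'
  have hr2 : Continuous fun x => D x ^ (-p - 1) :=
    hDc.rpow_const fun x => Or.inl (hD x).ne'
  have hu'c : Continuous u' := by
    simp only [hu'def]
    exact (Real.continuous_cos.mul hr1).add
      (Real.continuous_sin.mul (((continuous_const.mul Real.continuous_sin).mul
        continuous_const).mul hr2))
  -- rewrite integrand
  have hfun : (fun α' => Real.sin α' * Real.sin (N * α') /
      |h ^ 2 + c * (1 - Real.cos α')| ^ p) = fun α' => u α' * Real.sin (N * α') := by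
    funext x
    have : |h ^ 2 + c * (1 - Real.cos x)| = D x := abs_of_pos (hD x)
    show Real.sin x * Real.sin (N * x) / |h ^ 2 + c * (1 - Real.cos x)| ^ p =
      Real.sin x * D x ^ (-p) * Real.sin (N * x)
    rw [this, Real.rpow_neg (hD x).le]
    ring
  rw [hfun, MeasureTheory.integral_Icc_eq_integral_Ioc,
    ← intervalIntegral.integral_of_le (by linarith [Real.pi_pos] : -Real.pi ≤ Real.pi)]
  have hIBP := intervalIntegral.integral_mul_deriv_eq_deriv_mul (a := -Real.pi)
    (b := Real.pi) (fun x _ => hu x) (fun x _ => hv x)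
    (hu'c.intervalIntegrable _ _)
    ((Real.continuous_sin.comp (continuous_const.mul continuous_id)).intervalIntegrable _ _)
  have hbd : u Real.pi = 0 ∧ u (-Real.pi) = 0 := by
    constructor <;> simp [hudef, Real.sin_pi]
  rw [hIBP, hbd.1, hbd.2]
  simp only [zero_mul, sub_zero, zero_sub, abs_neg]
  -- now bound |∫ u' x * v x|
  have key : ∀ x, |u' x| ≤ (1 + 2 * p) * (h ^ 2) ^ (-p) := by
    intro x
    have hD2 : (h ^ 2 : ℝ) ≤ D x := by
      have : 0 ≤ c * (1 - Real.cos x) :=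
        mul_nonneg hc (by nlinarith [Real.cos_le_one x])
      simp only [hDdef]; linarith
    have hmono : D x ^ (-p) ≤ (h ^ 2) ^ (-p) :=
      Real.rpow_le_rpow_of_nonpos (by positivity) hD2 (by linarith)
    have hF : 0 ≤ D x ^ (-p) := Real.rpow_nonneg (hD x).le _
    have hE : 0 ≤ D x ^ (-p - 1) := Real.rpow_nonneg (hD x).le _
    have t1 : |Real.cos x * D x ^ (-p)| ≤ (h ^ 2) ^ (-p) := by
      rw [abs_mul, abs_of_nonneg hF]
      calc |Real.cos x| * D x ^ (-p) ≤ 1 * ((h^2) ^ (-p)) := by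
            apply mul_le_mul (Real.abs_cos_le_one x) hmono hF zero_le_one
        _ = (h^2) ^ (-p) := one_mul _
    have hsin : c * Real.sin x ^ 2 ≤ 2 * D x := by
      have h1 := Real.sin_sq_add_cos_sq x
      have h2 := Real.cos_le_one x
      have h3 := Real.neg_one_le_cos x
      simp only [hDdef]
      nlinarith [mul_nonneg hc (by nlinarith : (0:ℝ) ≤ 1 - Real.cos x), sq_nonneg h]
    have hDE : D x * D x ^ (-p - 1) = D x ^ (-p) := by
      have := Real.rpow_add (hD x) 1 (-p - 1)
      rw [Real.rpow_one] at this
      rw [← this]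
      ring_nf
    have t2 : |Real.sin x * (c * Real.sin x * -p * D x ^ (-p - 1))| ≤
        2 * p * (h ^ 2) ^ (-p) := by
      have hTeq : Real.sin x * (c * Real.sin x * -p * D x ^ (-p - 1)) =
          -(p * (c * Real.sin x ^ 2) * D x ^ (-p - 1)) := by ring
      rw [hTeq, abs_neg, abs_of_nonneg (mul_nonneg (mul_nonneg (by linarith)
        (mul_nonneg hc (sq_nonneg _))) hE)]
      calc p * (c * Real.sin x ^ 2) * D x ^ (-p - 1)
          ≤ p * (2 * D x) * D x ^ (-p - 1) := by
            apply mul_le_mul_of_nonneg_right (mul_le_mul_of_nonneg_left hsin (by linarith)) hE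
        _ = 2 * p * (D x * D x ^ (-p - 1)) := by ring
        _ = 2 * p * D x ^ (-p) := by rw [hDE]
        _ ≤ 2 * p * (h ^ 2) ^ (-p) := by
            apply mul_le_mul_of_nonneg_left hmono (by linarith)
    calc |u' x| ≤ |Real.cos x * D x ^ (-p)| +
        |Real.sin x * (c * Real.sin x * -p * D x ^ (-p - 1))| := abs_add_le _ _
      _ ≤ (h ^ 2) ^ (-p) + 2 * p * (h ^ 2) ^ (-p) := add_le_add t1 t2
      _ = (1 + 2 * p) * (h ^ 2) ^ (-p) := by ring
  have hCnonneg : 0 ≤ (1 + 2 * p) * (h ^ 2) ^ (-p) :=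
    mul_nonneg (by linarith) (Real.rpow_nonneg (by positivity) _)
  have hbound := intervalIntegral.norm_integral_le_of_norm_le_const
    (a := -Real.pi) (b := Real.pi) (C := (1 + 2 * p) * (h ^ 2) ^ (-p) / N)
    (f := fun x => u' x * v x) ?_
  · rw [Real.norm_eq_abs] at hbound
    calc |∫ x in (-Real.pi)..Real.pi, u' x * v x|
        ≤ (1 + 2 * p) * (h ^ 2) ^ (-p) / N * |Real.pi - -Real.pi| := hbound
      _ = 2 * Real.pi * (1 + 2 * p) / N * (h ^ 2) ^ (-p) := by
          rw [abs_of_nonneg (by linarith [Real.pi_pos] : (0:ℝ) ≤ Real.pi - -Real.pi)]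
          ring
  · intro x _
    rw [Real.norm_eq_abs, hvdef]
    calc |u' x * (-Real.cos (N * x) / N)|
        = |u' x| * (|Real.cos (N * x)| / N) := by
          rw [abs_mul, abs_div, abs_neg, Nat.abs_cast]
      _ ≤ ((1 + 2 * p) * (h ^ 2) ^ (-p)) * (1 / N) := by
          have hcc : |Real.cos (N * x)| / (N:ℝ) ≤ 1 / N := by
            gcongr
            exact Real.abs_cos_le_one _
          exact mul_le_mul (key x) hcc (by positivity) hCnonneg
      _ = (1 + 2 * p) * (h ^ 2) ^ (-p) / N := by ring

/-- Inner decay bound for the radial velocity component of the oscillatory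
function `g_N`, for radii `0 ≤ r < R₀` inside the hole of the annular support. -/
theorem vRadial_inner_bound (γ : ℝ) (hγ : γ ∈ Set.Ico (-1 : ℝ) 1)
    (R₀ R₁ : ℝ) (hR₀ : 0 < R₀) (hR : R₀ < R₁) :
    ∃ C > (0:ℝ), ∀ (gt α₀ : ℝ → ℝ), ContDiff ℝ (⊤ : ℕ∞) gt →
      Function.support gt ⊆ Set.Ioo R₀ R₁ → ContDiff ℝ (⊤ : ℕ∞) α₀ →
      ∀ N : ℕ, 0 < N → ∀ r α : ℝ, 0 ≤ r → r < R₀ →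
        |vRadial γ gt α₀ N r α| ≤
          C * (⨆ x, |gt x|) / ((N : ℝ) * (R₀ - r) ^ (2 + γ)) := by
  obtain ⟨hγ1, hγ2⟩ := hγ
  have h2γ : (0:ℝ) < 2 + γ := by linarith
  have h4γ : (0:ℝ) < 4 + γ := by linarith
  set c1 : ℝ := |Cgamma γ| * R₁ ^ 2 * (2 * Real.pi * (4 + γ)) / (2 + γ) with hc1def
  have hc1 : 0 ≤ c1 := by
    apply div_nonneg _ h2γ.le
    have := Real.pi_pos
    positivity
  refine ⟨c1 + 1, by linarith, ?_⟩
  intro gt α₀ hgt hsupp hα₀ N hN r α hr hrR₀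
  have hNR : (0:ℝ) < N := by exact_mod_cast hN
  set S : ℝ := ⨆ x, |gt x| with hSdef
  have hcs : HasCompactSupport gt := by
    apply HasCompactSupport.intro (isCompact_Icc (a := R₀) (b := R₁))
    intro x hx
    by_contra hne
    exact hx (Set.Ioo_subset_Icc_self (hsupp (Function.mem_support.2 hne)))
  have hBdd : BddAbove (Set.range fun x => |gt x|) :=
    (hgt.continuous.abs).bddAbove_range_of_hasCompactSupport hcs.abs
  have hS : ∀ y, |gt y| ≤ S := fun y => le_ciSup hBdd y
  have hS0 : 0 ≤ S := le_trans (abs_nonneg _) (hS 0)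
  set d : ℝ := R₀ - r with hddef
  have hd : 0 < d := by simp only [hddef]; linarith
  set dp : ℝ := d ^ (2 + γ) with hdpdef
  have hdp : 0 < dp := Real.rpow_pos_of_pos hd _
  set K : ℝ := S * R₁ ^ 2 * (2 * Real.pi * (4 + γ) / N) with hKdef
  have hK0 : 0 ≤ K := by
    apply mul_nonneg (mul_nonneg hS0 (sq_nonneg _))
    have := Real.pi_pos
    positivity
  set φ : ℝ → ℝ := fun h => K * (Set.Ioi d).indicator (fun h => h ^ (-(3 + γ))) h with hφdef
  have hφ0 : ∀ h, 0 ≤ φ h := by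
    intro h
    apply mul_nonneg hK0
    apply Set.indicator_nonneg
    intro y hy
    exact Real.rpow_nonneg (le_of_lt (lt_trans hd hy)) _
  set G : ℝ → ℝ := fun h =>
    gt (r + h) * (r + h) ^ 2 * Real.cos (N * α - N * α₀ (r + h)) *
      ∫ α' in Set.Icc (-Real.pi) Real.pi,
        Real.sin α' * Real.sin (N * α') /
          |h ^ 2 + 2 * r * (r + h) * (1 - Real.cos α')| ^ ((3 + γ) / 2) with hGdef
  have hGbound : ∀ h : ℝ, ‖G h‖ ≤ φ h := by
    intro h
    rcases eq_or_ne (gt (r + h)) 0 with hz | hnz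
    · simp only [hGdef, hz, zero_mul, norm_zero]
      exact hφ0 h
    · have hmem : r + h ∈ Set.Ioo R₀ R₁ := hsupp (Function.mem_support.2 hnz)
      have hh : d < h := by
        have := hmem.1
        simp only [hddef]; linarith
      have hh0 : 0 < h := lt_trans hd hh
      have hrh : 0 < r + h := by linarith
      have hpow : ((h:ℝ) ^ 2) ^ (-((3 + γ) / 2)) = h ^ (-(3 + γ)) := by
        rw [← Real.rpow_natCast h 2, ← Real.rpow_mul hh0.le]
        norm_num
        congr 1
        ring
      have hJb : |∫ α' in Set.Icc (-Real.pi) Real.pi,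
          Real.sin α' * Real.sin (N * α') /
            |h ^ 2 + 2 * r * (r + h) * (1 - Real.cos α')| ^ ((3 + γ) / 2)| ≤
          2 * Real.pi * (4 + γ) / N * h ^ (-(3 + γ)) := by
        have := inner_osc_bound (p := (3 + γ) / 2) (c := 2 * r * (r + h))
          (by linarith) (by positivity) hh0 hN
        rw [hpow] at this
        have he : (1 : ℝ) + 2 * ((3 + γ) / 2) = 4 + γ := by ring
        rw [he] at this
        exact this
      have h1 : |gt (r + h)| ≤ S := hS _
      have h2 : (r + h) ^ 2 ≤ R₁ ^ 2 := by nlinarith [hmem.2]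
      have hstep : ‖G h‖ ≤ S * R₁ ^ 2 * 1 *
          (2 * Real.pi * (4 + γ) / N * h ^ (-(3 + γ))) := by
        simp only [hGdef, Real.norm_eq_abs, abs_mul]
        rw [abs_of_nonneg (sq_nonneg (r + h))]
        apply mul_le_mul _ hJb (abs_nonneg _)
          (mul_nonneg (mul_nonneg hS0 (sq_nonneg _)) zero_le_one)
        apply mul_le_mul _ (Real.abs_cos_le_one _) (abs_nonneg _)
          (mul_nonneg hS0 (sq_nonneg _))
        exact mul_le_mul h1 h2 (sq_nonneg _) hS0
      calc ‖G h‖ ≤ S * R₁ ^ 2 * 1 * (2 * Real.pi * (4 + γ) / N * h ^ (-(3 + γ))) := hstep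
        _ = φ h := by
            simp only [hφdef, Set.indicator_of_mem (Set.mem_Ioi.2 hh), hKdef]
            ring
  have hind : Integrable ((Set.Ioi d).indicator fun h : ℝ => h ^ (-(3 + γ))) := by
    rw [integrable_indicator_iff measurableSet_Ioi]
    exact integrableOn_Ioi_rpow_of_lt (by linarith) hd
  have hφint : Integrable φ (volume.restrict (Set.Ioi (-r))) :=
    (hind.restrict).const_mul K
  have hval : ∫ h in Set.Ioi (-r), φ h = K * (d ^ (-(2 + γ)) / (2 + γ)) := by
    simp only [hφdef]
    rw [MeasureTheory.integral_const_mul, MeasureTheory.integral_indicator measurableSet_Ioi,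
      Measure.restrict_restrict measurableSet_Ioi,
      Set.inter_eq_self_of_subset_left (Set.Ioi_subset_Ioi (by linarith : -r ≤ d)),
      integral_Ioi_rpow_of_lt (by linarith) hd]
    congr 1
    have he : -(3 + γ) + 1 = -(2 + γ) := by ring
    rw [he, neg_div_neg_eq]
  -- assemble
  have hstep1 : |vRadial γ gt α₀ N r α| ≤ |Cgamma γ| * ∫ h in Set.Ioi (-r), ‖G h‖ := by
    simp only [vRadial, abs_mul]
    apply mul_le_mul_of_nonneg_left _ (abs_nonneg _)
    exact (Real.norm_eq_abs _ ▸ MeasureTheory.norm_integral_le_integral_norm G :)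
  have hstep2 : ∫ h in Set.Ioi (-r), ‖G h‖ ≤ ∫ h in Set.Ioi (-r), φ h := by
    apply MeasureTheory.integral_mono_of_nonneg
      (Filter.Eventually.of_forall fun h => norm_nonneg _) hφint
      (Filter.Eventually.of_forall hGbound)
  have heq : |Cgamma γ| * (K * (d ^ (-(2 + γ)) / (2 + γ))) = c1 * S / ((N:ℝ) * dp) := by
    rw [Real.rpow_neg hd.le, ← hdpdef, hKdef, hc1def]
    field_simp
  calc |vRadial γ gt α₀ N r α|
      ≤ |Cgamma γ| * ∫ h in Set.Ioi (-r), ‖G h‖ := hstep1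
    _ ≤ |Cgamma γ| * ∫ h in Set.Ioi (-r), φ h :=
        mul_le_mul_of_nonneg_left hstep2 (abs_nonneg _)
    _ = |Cgamma γ| * (K * (d ^ (-(2 + γ)) / (2 + γ))) := by rw [hval]
    _ = c1 * S / ((N:ℝ) * dp) := heq
    _ ≤ (c1 + 1) * S / ((N:ℝ) * dp) := by
        rw [div_eq_mul_inv, div_eq_mul_inv]
        apply mul_le_mul_of_nonneg_right _ (inv_nonneg.2 (by positivity))
        apply mul_le_mul_of_nonneg_right _ hS0
        linarith
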